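/- Let n ≥ 5 be an integer and x ∈ ℂ, and let A be the n×n tridiagonal matrix associated with a := x and b := i (where i = √−1). Then det(A) = (x² + 4)·F(n−1), where F(k) denotes the k-th Fibonacci polynomial evaluated at x. -/

import Mathlib

/-!
Expanding along the last row gives the continuant recurrence
`D (k + 2) = d (k + 1) * D (k + 1) - u k * l k * D k` for the leading principal minors of a
tridiagonal matrix. For `a = x`, `b = i` the interior products `u k * l k` equal `-1`, so the
minors below the full matrix satisfy the Fibonacci recurrence and, starting from `D 1 = x` and
`D 2 = x² + 2`, are the Lucas polynomials `L k = F (k + 1) + F (k - 1)`. The final step, where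
`u * l = -2`, gives `x L (n - 1) + 2 L (n - 2) = L n + L (n - 2) = (x² + 4) F (n - 1)`.
-/

/-- The `n × n` complex tridiagonal matrix `A` (1-based indices): `A_{j,j} = a`,
`A_{1,2} = 2b`, `A_{2,1} = b`, `A_{n-1,n} = b`, `A_{n,n-1} = 2b`,
`A_{j,j+1} = A_{j+1,j} = -b` for `2 ≤ j ≤ n-2`, all other entries `0`. -/
def matA (n : ℕ) (a b : ℂ) : Matrix (Fin n) (Fin n) ℂ :=
  Matrix.of fun i j =>
    let i' := (i : ℕ) + 1
    let j' := (j : ℕ) + 1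
    if i' = j' then a
    else if i' = 1 ∧ j' = 2 then 2 * b
    else if i' = 2 ∧ j' = 1 then b
    else if i' = n - 1 ∧ j' = n then b
    else if i' = n ∧ j' = n - 1 then 2 * b
    else if (i' + 1 = j' ∨ j' + 1 = i') ∧ 2 ≤ min i' j' ∧ min i' j' ≤ n - 2 then -b
    else 0

/-- Fibonacci polynomials evaluated at `x`:
`F 0 = 0`, `F 1 = 1`, `F (k+2) = x * F (k+1) + F k`. -/
def fibP (x : ℂ) : ℕ → ℂ
  | 0 => 0
  | 1 => 1
  | (k + 2) => x * fibP x (k + 1) + fibP x k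

namespace Matrix

variable {R : Type*} [CommRing R]

theorem det_succ_of_column_last_eq_zero {k : ℕ} (A : Matrix (Fin (k + 1)) (Fin (k + 1)) R)
    (h : ∀ i : Fin k, A i.castSucc (Fin.last k) = 0) :
    A.det = A (Fin.last k) (Fin.last k) * (A.submatrix Fin.castSucc Fin.castSucc).det := by
  rw [det_succ_column A (Fin.last k), Fin.sum_univ_castSucc]
  simp [h, Fin.succAbove_last]

theorem det_succ_succ_of_row_last_eq_zero {k : ℕ} (A : Matrix (Fin (k + 2)) (Fin (k + 2)) R)
    (h : ∀ j : Fin k, A (Fin.last (k + 1)) j.castSucc.castSucc = 0) :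
    A.det = A (Fin.last (k + 1)) (Fin.last (k + 1)) * (A.submatrix Fin.castSucc Fin.castSucc).det
      - A (Fin.last (k + 1)) (Fin.last k).castSucc *
        (A.submatrix Fin.castSucc (Fin.last k).castSucc.succAbove).det := by
  rw [det_succ_row A (Fin.last (k + 1)), Fin.sum_univ_castSucc, Fin.sum_univ_castSucc]
  simp only [h, Fin.succAbove_last, Fin.val_last, Fin.val_castSucc]
  rw [(Odd.neg_one_pow ⟨k, by ring⟩ : (-1 : R) ^ (k + 1 + k) = -1),
    (Even.neg_one_pow ⟨k + 1, rfl⟩ : (-1 : R) ^ (k + 1 + (k + 1)) = 1)]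
  simp only [mul_zero, zero_mul, Finset.sum_const_zero]
  ring

def tridiagonal (d u l : ℕ → R) (k : ℕ) : Matrix (Fin k) (Fin k) R :=
  of fun i j =>
    if (i : ℕ) = j then d i
    else if (i : ℕ) + 1 = j then u i
    else if (j : ℕ) + 1 = i then l j
    else 0

variable (d u l : ℕ → R)

@[simp]
theorem tridiagonal_submatrix_castSucc (k : ℕ) :
    (tridiagonal d u l (k + 1)).submatrix Fin.castSucc Fin.castSucc = tridiagonal d u l k := by
  ext i j
  simp [tridiagonal]

theorem det_tridiagonal_zero : (tridiagonal d u l 0).det = 1 := det_isEmpty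

theorem det_tridiagonal_one : (tridiagonal d u l 1).det = d 0 := det_unique _

theorem det_tridiagonal_succ_succ (k : ℕ) :
    (tridiagonal d u l (k + 2)).det
      = d (k + 1) * (tridiagonal d u l (k + 1)).det - u k * l k * (tridiagonal d u l k).det := by
  rw [det_succ_succ_of_row_last_eq_zero _ fun j => by simp [tridiagonal]; grind,
    det_succ_of_column_last_eq_zero
      ((tridiagonal d u l (k + 2)).submatrix Fin.castSucc (Fin.last k).castSucc.succAbove)
      fun i => by simp [tridiagonal]; grind]
  have hminor : ((tridiagonal d u l (k + 2)).submatrix Fin.castSucc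
      (Fin.last k).castSucc.succAbove).submatrix Fin.castSucc Fin.castSucc = tridiagonal d u l k := by
    ext i j
    simp [tridiagonal, Fin.succAbove_castSucc_of_lt _ _ (Fin.castSucc_lt_last j)]
  have hd : tridiagonal d u l (k + 2) (Fin.last (k + 1)) (Fin.last (k + 1)) = d (k + 1) := by
    simp [tridiagonal]
  have hl : tridiagonal d u l (k + 2) (Fin.last (k + 1)) (Fin.last k).castSucc = l k := by
    simp [tridiagonal, show k + 1 + 1 ≠ k by omega]
  have hu : tridiagonal d u l (k + 2) (Fin.last k).castSucc (Fin.last (k + 1)) = u k := by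
    simp [tridiagonal]
  simp only [hminor, tridiagonal_submatrix_castSucc, submatrix_apply,
    Fin.succAbove_of_le_castSucc _ _ le_rfl, Fin.succ_last, hd, hl, hu]
  ring

end Matrix

open Matrix

theorem matA_eq_tridiagonal {n : ℕ} (hn : 3 ≤ n) (a b : ℂ) :
    matA n a b = tridiagonal (fun _ => a)
      (fun j => if j = 0 then 2 * b else if j = n - 2 then b else -b)
      (fun j => if j = 0 then b else if j = n - 2 then 2 * b else -b) n := by
  ext i j
  simp only [matA, tridiagonal, of_apply]
  split_ifs <;> first | rfl | omega

theorem det_tridiagonal_succ_eq_fibP_add_fibP (x : ℂ) {u l : ℕ → ℂ} {m : ℕ}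
    (h₀ : u 0 * l 0 = -2) (h : ∀ j, 0 < j → j < m → u j * l j = -1) :
    ∀ k ≤ m, (tridiagonal (fun _ => x) u l (k + 1)).det = fibP x (k + 2) + fibP x k := by
  intro k
  induction k using Nat.twoStepInduction with
  | zero =>
    intro _
    rw [det_tridiagonal_one]
    simp [fibP]
  | one =>
    intro _
    rw [det_tridiagonal_succ_succ, det_tridiagonal_one, det_tridiagonal_zero, h₀]
    simp only [fibP]
    ring
  | more k ih₀ ih₁ =>
    intro hk
    rw [det_tridiagonal_succ_succ, ih₁ (by omega), ih₀ (by omega), h (k + 1) (by omega) (by omega)]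
    simp only [fibP]
    ring

theorem sq_add_four_mul_fibP (x : ℂ) (m : ℕ) :
    (x ^ 2 + 4) * fibP x (m + 2)
      = x * (fibP x (m + 3) + fibP x (m + 1)) + 2 * (fibP x (m + 2) + fibP x m) := by
  simp only [fibP]
  ring

/-- For `n ≥ 5` and `x : ℂ`, the matrix `A` with `a := x`, `b := i` satisfies
`det A = (x² + 4)·F_{n-1}(x)`, where `F` are the Fibonacci polynomials. -/
theorem det_matA_fibP (n : ℕ) (hn : 5 ≤ n) (x : ℂ) :
    Matrix.det (matA n x Complex.I) = (x ^ 2 + 4) * fibP x (n - 1) := by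
  obtain ⟨m, rfl⟩ : ∃ m, n = m + 3 := ⟨n - 3, by omega⟩
  rw [matA_eq_tridiagonal (by omega)]
  set u : ℕ → ℂ := fun j => if j = 0 then 2 * Complex.I else if j = m + 3 - 2 then Complex.I
    else -Complex.I
  set l : ℕ → ℂ := fun j => if j = 0 then Complex.I else if j = m + 3 - 2 then 2 * Complex.I
    else -Complex.I
  have hfirst : u 0 * l 0 = -2 := by
    simp only [u, l, if_pos rfl]
    linear_combination 2 * Complex.I_mul_I
  have hmid : ∀ j, 0 < j → j < m + 1 → u j * l j = -1 := by
    intro j hj₀ hj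
    simp only [u, l, if_neg hj₀.ne', if_neg (show j ≠ m + 3 - 2 by omega)]
    linear_combination Complex.I_mul_I
  have hlast : u (m + 1) * l (m + 1) = -2 := by
    simp only [u, l, if_neg m.succ_ne_zero, if_pos (show m + 1 = m + 3 - 2 by omega)]
    linear_combination 2 * Complex.I_mul_I
  have hdet := det_tridiagonal_succ_eq_fibP_add_fibP x hfirst hmid
  rw [det_tridiagonal_succ_succ, hdet (m + 1) le_rfl, hdet m (by omega), hlast,
    show m + 3 - 1 = m + 2 by omega, sq_add_four_mul_fibP]
  ring
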